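/- arXiv:1803.05577 — 2 statements merged into one kernel-verified Lean document; each statement's English description precedes it below -/
import Mathlib

section
/- A vehicle starting at position 0 with speed v0, subject to |u(t)| ≤ u_max and 0 < v(t) ≤ v_max, cannot reach position L earlier than time t0 + L/v_max + (v_max − v0)²/(2 u_max v_max) when it can reach v_max before covering distance L; hence this expression is a lower bound on the terminal time t^m. -/
/-!
Since `u ≤ umax`, the speed stays below `v0 + umax (t - t0)`, so the vehicle covers at most
`(vmax² - v0²) / (2 umax) ≤ L` before the time `τ = (vmax - v0) / umax`; hence `tm - t0 ≥ τ`.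
On `[t0, t0 + τ]` it then falls behind a vehicle cruising at `vmax` by at least
`vmax τ - (v0 τ + umax τ² / 2) = (vmax - v0)² / (2 umax)`, and since `v ≤ vmax` it cannot
catch up later: `L ≤ vmax (tm - t0) - (vmax - v0)² / (2 umax)`.
-/

open Set

theorem sub_le_sub_of_hasDerivAt_le {f g f' g' : ℝ → ℝ} {a b : ℝ}
    (hf : ∀ t, HasDerivAt f (f' t) t) (hg : ∀ t, HasDerivAt g (g' t) t)
    (hle : ∀ t ∈ Ico a b, f' t ≤ g' t) {x : ℝ} (hx : x ∈ Icc a b) :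
    f x - f a ≤ g x - g a := by
  have hB : ∀ t, HasDerivAt (fun t => f a + (g t - g a)) (g' t) t := fun t =>
    ((hg t).sub_const (g a)).const_add (f a)
  have := image_le_of_deriv_right_le_deriv_boundary
    (fun t _ => (hf t).continuousAt.continuousWithinAt) (fun t _ => (hf t).hasDerivWithinAt)
    (by simp) (fun t _ => (hB t).continuousAt.continuousWithinAt)
    (fun t _ => (hB t).hasDerivWithinAt) hle hx
  linarith

section DoubleIntegrator

variable {p v u : ℝ → ℝ} {a b umax vmax : ℝ}

theorem velocity_sub_le_of_accel_le (hv : ∀ t, HasDerivAt v (u t) t)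
    (hu : ∀ t ∈ Ico a b, u t ≤ umax) {x : ℝ} (hx : x ∈ Icc a b) :
    v x - v a ≤ umax * (x - a) := by
  have hg : ∀ t, HasDerivAt (fun t => umax * (t - a)) umax t := fun t => by
    simpa using ((hasDerivAt_id t).sub_const a).const_mul umax
  simpa using sub_le_sub_of_hasDerivAt_le hv hg hu hx

theorem position_sub_le_of_accel_le (hp : ∀ t, HasDerivAt p (v t) t)
    (hv : ∀ t, HasDerivAt v (u t) t) (hu : ∀ t ∈ Ico a b, u t ≤ umax) (hab : a ≤ b) :
    p b - p a ≤ v a * (b - a) + umax * (b - a) ^ 2 / 2 := by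
  have hg : ∀ t, HasDerivAt (fun t => v a * (t - a) + umax * (t - a) ^ 2 / 2)
      (v a + umax * (t - a)) t := fun t => by
    have hs : HasDerivAt (fun t => t - a) 1 t := (hasDerivAt_id' t).sub_const a
    refine ((hs.const_mul (v a)).fun_add
      (((hs.fun_pow 2).const_mul umax).div_const 2)).congr_deriv ?_
    push_cast
    ring
  have hspeed : ∀ t ∈ Ico a b, v t ≤ v a + umax * (t - a) := fun t ht => by
    linarith [velocity_sub_le_of_accel_le hv hu (Ico_subset_Icc_self ht)]
  simpa using sub_le_sub_of_hasDerivAt_le hp hg hspeed (right_mem_Icc.2 hab)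

theorem position_sub_le_of_speed_le (hp : ∀ t, HasDerivAt p (v t) t)
    (hv : ∀ t ∈ Ico a b, v t ≤ vmax) (hab : a ≤ b) :
    p b - p a ≤ vmax * (b - a) := by
  have hg : ∀ t, HasDerivAt (fun t => vmax * (t - a)) vmax t := fun t => by
    simpa using ((hasDerivAt_id t).sub_const a).const_mul vmax
  simpa using sub_le_sub_of_hasDerivAt_le hp hg hv (right_mem_Icc.2 hab)

theorem reach_time_le_of_position_sub_ge (hp : ∀ t, HasDerivAt p (v t) t)
    (hv : ∀ t, HasDerivAt v (u t) t) (hu : ∀ t ∈ Ico a b, u t ≤ umax) (hab : a ≤ b)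
    (humax : 0 < umax) (hva : 0 ≤ v a)
    (hdist : (vmax ^ 2 - v a ^ 2) / (2 * umax) ≤ p b - p a) :
    a + (vmax - v a) / umax ≤ b := by
  by_contra! hb
  have hspeed : v a + umax * (b - a) < vmax := by
    have : b - a < (vmax - v a) / umax := by linarith
    rw [lt_div_iff₀' humax] at this
    linarith
  have hgap : v a * (b - a) + umax * (b - a) ^ 2 / 2
      = (vmax ^ 2 - v a ^ 2) / (2 * umax)
        - (vmax ^ 2 - (v a + umax * (b - a)) ^ 2) / (2 * umax) := by
    field_simp
    ring
  have hpos : 0 < (vmax ^ 2 - (v a + umax * (b - a)) ^ 2) / (2 * umax) := by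
    have : 0 ≤ v a + umax * (b - a) := add_nonneg hva (mul_nonneg humax.le (sub_nonneg.2 hab))
    exact div_pos (sub_pos.2 (pow_lt_pow_left₀ hspeed this two_ne_zero)) (by positivity)
  linarith [position_sub_le_of_accel_le hp hv hu hab]

theorem position_sub_le_of_accel_le_of_speed_le (hp : ∀ t, HasDerivAt p (v t) t)
    (hv : ∀ t, HasDerivAt v (u t) t) (hu : ∀ t ∈ Ico a b, u t ≤ umax)
    (hvmax : ∀ t ∈ Ico a b, v t ≤ vmax) (humax : 0 < umax) (hva : v a ≤ vmax)
    (hreach : a + (vmax - v a) / umax ≤ b) :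
    p b - p a ≤ vmax * (b - a) - (vmax - v a) ^ 2 / (2 * umax) := by
  set s := a + (vmax - v a) / umax with hs
  have has : a ≤ s := le_add_of_nonneg_right (div_nonneg (sub_nonneg.2 hva) humax.le)
  have haccel := position_sub_le_of_accel_le hp hv
    (fun t ht => hu t (Ico_subset_Ico_right hreach ht)) has
  have hcruise := position_sub_le_of_speed_le hp
    (fun t ht => hvmax t (Ico_subset_Ico_left has ht)) hreach
  have hlost : v a * (s - a) + umax * (s - a) ^ 2 / 2 + vmax * (b - s)
      = vmax * (b - a) - (vmax - v a) ^ 2 / (2 * umax) := by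
    rw [hs]
    field_simp
    ring
  linarith

end DoubleIntegrator

/-- lower bound on the terminal time when v_max is
reachable within distance L. -/
theorem terminal_time_lower_bound_vmax
    (t0 tm v0 L vmax umax : ℝ)
    (p v u : ℝ → ℝ)
    (ht : t0 ≤ tm) (humax : 0 < umax) (hv0pos : 0 < v0) (hv0max : v0 ≤ vmax)
    (hL : (vmax^2 - v0^2) / (2 * umax) ≤ L)
    (hp : ∀ t, HasDerivAt p (v t) t)
    (hv : ∀ t, HasDerivAt v (u t) t)
    (hu_bd : ∀ t ∈ Set.Icc t0 tm, u t ≤ umax)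
    (hv_bd : ∀ t ∈ Set.Icc t0 tm, 0 < v t ∧ v t ≤ vmax)
    (hp0 : p t0 = 0) (hv0 : v t0 = v0) (hpm : p tm = L) :
    tm ≥ t0 + L / vmax + (vmax - v0)^2 / (2 * umax * vmax) := by
  have hvmax : 0 < vmax := hv0pos.trans_le hv0max
  have hu : ∀ t ∈ Ico t0 tm, u t ≤ umax := fun t ht => hu_bd t (Ico_subset_Icc_self ht)
  have hspeed : ∀ t ∈ Ico t0 tm, v t ≤ vmax := fun t ht => (hv_bd t (Ico_subset_Icc_self ht)).2
  have hreach : t0 + (vmax - v t0) / umax ≤ tm :=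
    reach_time_le_of_position_sub_ge hp hv hu ht humax (hv0 ▸ hv0pos.le)
      (by rwa [hv0, hp0, hpm, sub_zero])
  have hdist :=
    position_sub_le_of_accel_le_of_speed_le hp hv hu hspeed humax (hv0 ▸ hv0max) hreach
  rw [hp0, hpm, hv0, sub_zero] at hdist
  have hgap : tm - (t0 + L / vmax + (vmax - v0) ^ 2 / (2 * umax * vmax))
      = (vmax * (tm - t0) - (vmax - v0) ^ 2 / (2 * umax) - L) / vmax := by
    field_simp
    ring
  rw [ge_iff_le, ← sub_nonneg, hgap]
  exact div_nonneg (by linarith) hvmax.le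
end

section
/- For the terminal-time recursion t_i^m = max{t_{i−1}^m + δ/v_{i−1}^m, t_i^c} (case i−1 ∈ L_i, same lane), if vehicle i−1 enters the merging zone at time t_{i−1}^m with constant speed v_{i−1}^m > 0 and vehicle i enters at t_i^m with speed v_i^m ≤ v_{i−1}^m, both cruising at constant speed inside a merging zone of length S, then the inter-vehicle gap p_{i−1}(t) − p_i(t) ≥ δ for all times t in [t_i^m, t_{i−1}^m + S/v_{i−1}^m] during which both are inside the merging zone. -/
/-- rear-end safety inside the merging zone in the same-lane case. -/
theorem rear_end_safety_in_MZ
    (S δ tim1 ti vi1 vi : ℝ)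
    (hδ : 0 < δ) (hvi : 0 < vi) (hvle : vi ≤ vi1)
    (hti : ti ≥ tim1 + δ / vi1) :
    ∀ t ∈ Set.Icc ti (tim1 + S / vi1),
      vi1 * (t - tim1) - vi * (t - ti) ≥ δ := by
  intro t ht
  obtain ⟨h1, _⟩ := ht
  have hvi1 : 0 < vi1 := lt_of_lt_of_le hvi hvle
  have key : vi1 * (ti - tim1) ≥ δ := by
    have := (div_le_iff₀ hvi1).mp (by linarith : δ / vi1 ≤ ti - tim1)
    linarith
  nlinarith [mul_le_mul_of_nonneg_right hvle (by linarith : (0:ℝ) ≤ t - ti)]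
end
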